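/- Every invertible generalized hyperbolic operator on a Banach space is topologically stable. -/

import Mathlib

open Filter Topology Set

/-- An invertible operator `T` on a Banach space is generalized hyperbolic: `X = M ⊕ N` with
`M`, `N` closed subspaces, `T(M) ⊆ M`, `T⁻¹(N) ⊆ N`, and there are `c > 0`, `t ∈ (0,1)` with
`‖Tⁿ y‖ ≤ c tⁿ ‖y‖` and `‖T⁻ⁿ z‖ ≤ c tⁿ ‖z‖` for all `y ∈ M`, `z ∈ N`, `n ∈ ℕ`. -/
def IsGeneralizedHyperbolicBanach {𝕂 : Type*} [RCLike 𝕂] {X : Type*} [NormedAddCommGroup X]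
    [NormedSpace 𝕂 X] (T : X ≃L[𝕂] X) : Prop :=
  ∃ M N : Submodule 𝕂 X, IsClosed (M : Set X) ∧ IsClosed (N : Set X) ∧ IsCompl M N ∧
    (∀ y ∈ M, T y ∈ M) ∧ (∀ z ∈ N, T.symm z ∈ N) ∧
    ∃ c > (0 : ℝ), ∃ t ∈ Set.Ioo (0 : ℝ) 1,
      (∀ y ∈ M, ∀ n : ℕ, ‖(⇑T)^[n] y‖ ≤ c * t ^ n * ‖y‖) ∧
      (∀ z ∈ N, ∀ n : ℕ, ‖(⇑T.symm)^[n] z‖ ≤ c * t ^ n * ‖z‖)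

/-- `T` is topologically stable. -/
def TopologicallyStableBanach {X : Type*} [NormedAddCommGroup X] (T : X → X) : Prop :=
  ∀ ε > (0 : ℝ), ∃ δ > (0 : ℝ), ∀ S : X ≃ₜ X,
    (∀ x : X, ‖T x - S x‖ < δ) →
    ∃ φ : X → X, Continuous φ ∧ (∀ x : X, T (φ x) = φ (S x)) ∧ ∀ x : X, ‖φ x - x‖ < ε

/-!
Write the perturbation as `S = T + g` and look for the conjugacy in the form `φ = id + h`;
then `T ∘ φ = φ ∘ S` becomes the linear equation `T h = g + h ∘ S`. Split `g` along `X = M ⊕ N`.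
On `N`, where `T⁻¹` contracts, the equation is solved forward in time by
`∑ₙ T⁻⁽ⁿ⁺¹⁾ Q g(Sⁿ x)`; on `M`, where `T` contracts, backward in time by
`-∑ₙ Tⁿ P g(S⁻⁽ⁿ⁺¹⁾ x)`. Both series converge uniformly at a geometric rate, so `h` is continuous
and `‖h‖ ≤ K sup ‖g‖`, which is small when `S` is `δ`-close to `T`.
-/

open Function

section OrbitSeries

variable {𝕂 E α : Type*} [NontriviallyNormedField 𝕂] [NormedAddCommGroup E] [NormedSpace 𝕂 E]

noncomputable def orbitSeries (A : E →L[𝕂] E) (σ : α → α) (u : α → E) (x : α) : E :=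
  ∑' n : ℕ, A^[n] (u (σ^[n] x))

variable {A : E →L[𝕂] E} {σ : α → α} {u : α → E} {C t : ℝ}

theorem norm_iterate_apply_le_of_norm_le {B : E →L[𝕂] E} {c δ : ℝ} (hc : 0 ≤ c) (ht₀ : 0 ≤ t)
    (hAB : ∀ n y, ‖A^[n] (B y)‖ ≤ c * t ^ n * ‖B y‖) {v : α → E} (hv : ∀ a, ‖v a‖ ≤ δ)
    (n : ℕ) (a : α) : ‖A^[n] (B (v a))‖ ≤ c * (‖B‖ * δ) * t ^ n :=
  calc ‖A^[n] (B (v a))‖ ≤ c * t ^ n * ‖B (v a)‖ := hAB n _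
    _ ≤ c * t ^ n * (‖B‖ * δ) := by
      gcongr
      exact B.le_opNorm_of_le (hv a)
    _ = c * (‖B‖ * δ) * t ^ n := by ring

theorem norm_orbitSeries_le (ht₀ : 0 ≤ t) (ht₁ : t < 1)
    (hdecay : ∀ n a, ‖A^[n] (u a)‖ ≤ C * t ^ n) (x : α) :
    ‖orbitSeries A σ u x‖ ≤ C / (1 - t) :=
  div_eq_mul_inv C _ ▸
    tsum_of_norm_bounded ((hasSum_geometric_of_lt_one ht₀ ht₁).mul_left C) fun n => hdecay n _

variable [CompleteSpace E]

theorem summable_orbitSeries (ht₀ : 0 ≤ t) (ht₁ : t < 1)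
    (hdecay : ∀ n a, ‖A^[n] (u a)‖ ≤ C * t ^ n) (x : α) :
    Summable fun n : ℕ => A^[n] (u (σ^[n] x)) :=
  .of_norm_bounded ((summable_geometric_of_lt_one ht₀ ht₁).mul_left C) fun n => hdecay n _

theorem orbitSeries_eq_add (ht₀ : 0 ≤ t) (ht₁ : t < 1)
    (hdecay : ∀ n a, ‖A^[n] (u a)‖ ≤ C * t ^ n) (x : α) :
    orbitSeries A σ u x = u x + A (orbitSeries A σ u (σ x)) := by
  rw [orbitSeries, (summable_orbitSeries ht₀ ht₁ hdecay x).tsum_eq_zero_add, orbitSeries,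
    A.map_tsum (summable_orbitSeries ht₀ ht₁ hdecay _)]
  congr 1
  exact tsum_congr fun n => by rw [iterate_succ_apply', iterate_succ_apply]

theorem continuous_orbitSeries [TopologicalSpace α] (ht₀ : 0 ≤ t) (ht₁ : t < 1)
    (hdecay : ∀ n a, ‖A^[n] (u a)‖ ≤ C * t ^ n) (hσ : Continuous σ) (hu : Continuous u) :
    Continuous (orbitSeries A σ u) :=
  continuous_tsum (fun n => (A.continuous.iterate n).comp (hu.comp (hσ.iterate n)))
    ((summable_geometric_of_lt_one ht₀ ht₁).mul_left C) fun n _ => hdecay n _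

end OrbitSeries

section Hyperbolic

variable {𝕂 X : Type*} [RCLike 𝕂] [NormedAddCommGroup X] [NormedSpace 𝕂 X] [CompleteSpace X]
  {T : X ≃L[𝕂] X}

theorem IsGeneralizedHyperbolicBanach.exists_projections (hT : IsGeneralizedHyperbolicBanach T) :
    ∃ (P Q : X →L[𝕂] X) (c t : ℝ), 0 ≤ c ∧ 0 ≤ t ∧ t < 1 ∧ (∀ x, P x + Q x = x) ∧
      (∀ n x, ‖T^[n] (P x)‖ ≤ c * t ^ n * ‖P x‖) ∧
      (∀ n x, ‖T.symm^[n] (Q x)‖ ≤ c * t ^ n * ‖Q x‖) := by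
  obtain ⟨M, N, hM, hN, hMN, -, -, c, hc, t, ht, hdecayM, hdecayN⟩ := hT
  have hMN' := Submodule.IsCompl.isTopCompl_of_isClosed hMN hM hN
  exact ⟨M.projectionL N hMN', N.projectionL M hMN'.symm, c, t, hc.le, ht.1.le, ht.2,
    Submodule.projectionL_add_projectionL_eq_self hMN',
    fun n x => hdecayM _ (Submodule.projectionL_apply_mem _ x) n,
    fun n x => hdecayN _ (Submodule.projectionL_apply_mem _ x) n⟩

theorem IsGeneralizedHyperbolicBanach.exists_solution_cohomological_eq
    (hT : IsGeneralizedHyperbolicBanach T) :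
    ∃ K ≥ (0 : ℝ), ∀ (S : X ≃ₜ X) (g : X → X) (δ : ℝ), Continuous g → (∀ x, ‖g x‖ ≤ δ) →
      ∃ h : X → X, Continuous h ∧ (∀ x, ‖h x‖ ≤ K * δ) ∧ ∀ x, T (h x) = g x + h (S x) := by
  obtain ⟨P, Q, c, t, hc, ht₀, ht₁, hPQ, hP, hQ⟩ := hT.exists_projections
  have ht : 0 < 1 - t := sub_pos.2 ht₁
  refine ⟨c * (‖P‖ + ‖(T.symm : X →L[𝕂] X)‖ * ‖Q‖) / (1 - t), by positivity, ?_⟩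
  intro S g δ hg hgδ
  set F := orbitSeries (T : X →L[𝕂] X) S.symm (fun a => P (g (S.symm a)))
  set G := orbitSeries (T.symm : X →L[𝕂] X) S (fun a => Q (g a))
  have hdecayF := norm_iterate_apply_le_of_norm_le (A := (T : X →L[𝕂] X)) hc ht₀ hP
    (v := fun a => g (S.symm a)) fun _ => hgδ _
  have hdecayG := norm_iterate_apply_le_of_norm_le (A := (T.symm : X →L[𝕂] X)) hc ht₀ hQ hgδ
  refine ⟨fun x => T.symm (G x) - F x, ?_, fun x => ?_, fun x => ?_⟩
  · exact (T.symm.continuous.comp (continuous_orbitSeries ht₀ ht₁ hdecayG S.continuous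
      (Q.continuous.comp hg))).sub (continuous_orbitSeries ht₀ ht₁ hdecayF S.symm.continuous
      (P.continuous.comp (hg.comp S.symm.continuous)))
  · calc ‖T.symm (G x) - F x‖ ≤ ‖(T.symm : X →L[𝕂] X)‖ * ‖G x‖ + ‖F x‖ :=
          (norm_sub_le _ _).trans (add_le_add_left ((T.symm : X →L[𝕂] X).le_opNorm _) _)
      _ ≤ ‖(T.symm : X →L[𝕂] X)‖ * (c * (‖Q‖ * δ) / (1 - t)) + c * (‖P‖ * δ) / (1 - t) := by
          gcongr
          · exact norm_orbitSeries_le ht₀ ht₁ hdecayG x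
          · exact norm_orbitSeries_le ht₀ ht₁ hdecayF x
      _ = _ := by ring
  · have hG : G x = Q (g x) + T.symm (G (S x)) := orbitSeries_eq_add ht₀ ht₁ hdecayG x
    have hF : F (S x) = P (g x) + T (F x) := by
      simpa only [Homeomorph.symm_apply_apply, ContinuousLinearEquiv.coe_coe] using
        orbitSeries_eq_add (σ := S.symm) ht₀ ht₁ hdecayF (S x)
    dsimp only
    rw [map_sub, T.apply_symm_apply, hG]
    conv_rhs => rw [← hPQ (g x), hF]
    abel

end Hyperbolic

/-- Every invertible generalized hyperbolic operator on a Banach space is topologically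
stable. -/
theorem generalizedHyperbolic_topologicallyStable_banach
    {𝕂 : Type*} [RCLike 𝕂] {X : Type*} [NormedAddCommGroup X] [NormedSpace 𝕂 X]
    [CompleteSpace X] (T : X ≃L[𝕂] X) (hT : IsGeneralizedHyperbolicBanach T) :
    TopologicallyStableBanach (⇑T) := by
  obtain ⟨K, hK, hsolve⟩ := hT.exists_solution_cohomological_eq
  intro ε hε
  refine ⟨ε / (K + 1), by positivity, fun S hS => ?_⟩
  obtain ⟨h, hh, hbound, heq⟩ := hsolve S (fun x => S x - T x) (ε / (K + 1))
    (S.continuous.sub T.continuous) fun x => norm_sub_rev (S x) (T x) ▸ (hS x).le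
  refine ⟨fun x => x + h x, continuous_id.add hh, fun x => ?_, fun x => ?_⟩
  · show T (x + h x) = S x + h (S x)
    rw [map_add, heq, ← add_assoc, add_sub_cancel]
  · calc ‖x + h x - x‖ = ‖h x‖ := by rw [add_sub_cancel_left]
      _ ≤ K * (ε / (K + 1)) := hbound x
      _ < ε := by
        rw [mul_div_assoc', div_lt_iff₀ (by positivity)]
        nlinarith
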